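/- arXiv:1605.07689 — 2 statements merged into one kernel-verified Lean document; each statement's English description precedes it below -/
import Mathlib

section
/- Let L₁, L_N : ℝ^d → ℝ be twice continuously differentiable with Hessians M-Lipschitz in operator norm on a convex set U containing θ*, θ̄, θ̂, and suppose ∇L_N(θ̂) = 0. Define the surrogate L̃(θ) = L₁(θ) - ⟨θ, ∇L₁(θ̄) - ∇L_N(θ̄)⟩. Then ‖∇L̃(θ̂)‖₂ ≤ (2M‖θ̂ - θ̄‖₂ + 2M‖θ̂ - θ*‖₂ + ‖∇²L₁(θ*) - ∇²L_N(θ*)‖₂) · ‖θ̂ - θ̄‖₂. -/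
open scoped RealInnerProductSpace

lemma hasGradientAt_inner_const {d : ℕ} (c θ : EuclideanSpace ℝ (Fin d)) :
    HasGradientAt (fun x => ⟪x, c⟫) c θ := by
  rw [hasGradientAt_iff_hasFDerivAt]
  have h := (InnerProductSpace.toDual ℝ (EuclideanSpace ℝ (Fin d)) c).hasFDerivAt (x := θ)
  convert h using 2 with x
  · rfl
  · rfl
  simp only [InnerProductSpace.toDual_apply_apply]
  exact real_inner_comm _ _

/-- Bound on the gradient of the surrogate loss
`L̃(θ) = L₁(θ) - ⟨θ, ∇L₁(θ̄) - ∇L_N(θ̄)⟩` at the global minimizer `θ̂`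
(where `∇L_N(θ̂) = 0`), in terms of the distances `‖θ̂ - θ̄‖`, `‖θ̂ - θ*‖`
and the Hessian difference at `θ*`. -/
theorem stmt_4 {d : ℕ} (L1 LN : EuclideanSpace ℝ (Fin d) → ℝ)
    (H1 HN : EuclideanSpace ℝ (Fin d) → EuclideanSpace ℝ (Fin d) →L[ℝ] EuclideanSpace ℝ (Fin d))
    (U : Set (EuclideanSpace ℝ (Fin d))) (θstar θbar θhat : EuclideanSpace ℝ (Fin d)) (M : ℝ)
    (hL1 : ContDiff ℝ 2 L1) (hLN : ContDiff ℝ 2 LN) (hU : Convex ℝ U)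
    (hstar : θstar ∈ U) (hbar : θbar ∈ U) (hhat : θhat ∈ U)
    (hH1 : ∀ θ ∈ U, HasFDerivAt (gradient L1) (H1 θ) θ)
    (hHN : ∀ θ ∈ U, HasFDerivAt (gradient LN) (HN θ) θ)
    (hLip1 : ∀ x ∈ U, ∀ y ∈ U, ‖H1 x - H1 y‖ ≤ M * ‖x - y‖)
    (hLipN : ∀ x ∈ U, ∀ y ∈ U, ‖HN x - HN y‖ ≤ M * ‖x - y‖)
    (hcrit : gradient LN θhat = 0) :
    ‖gradient (fun θ => L1 θ - ⟪θ, gradient L1 θbar - gradient LN θbar⟫) θhat‖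
      ≤ (2 * M * ‖θhat - θbar‖ + 2 * M * ‖θhat - θstar‖ + ‖H1 θstar - HN θstar‖)
          * ‖θhat - θbar‖ := by
  set c := gradient L1 θbar - gradient LN θbar with hc
  -- compute the gradient of the surrogate
  have hdL1 : HasGradientAt L1 (gradient L1 θhat) θhat := by
    have : DifferentiableAt ℝ L1 θhat := (hL1.differentiable (by norm_num)).differentiableAt
    rw [hasGradientAt_iff_hasFDerivAt]
    simpa [gradient] using this.hasFDerivAt
  have hgrad : HasGradientAt (fun θ => L1 θ - ⟪θ, c⟫) (gradient L1 θhat - c) θhat := by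
    rw [hasGradientAt_iff_hasFDerivAt, map_sub]
    exact (hdL1.hasFDerivAt).sub ((hasGradientAt_inner_const c θhat).hasFDerivAt)
  rw [hgrad.gradient]
  -- rewrite as difference of G := ∇L1 - ∇LN
  set G : EuclideanSpace ℝ (Fin d) → EuclideanSpace ℝ (Fin d) :=
    fun θ => gradient L1 θ - gradient LN θ with hG
  have hGeq : gradient L1 θhat - c = G θhat - G θbar := by
    simp [hG, hc, hcrit]
  rw [hGeq]
  by_cases hne : θhat = θbar
  · subst hne
    simp only [sub_self, norm_zero, mul_zero]
    exact le_refl _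
  -- M ≥ 0
  have hM : 0 ≤ M := by
    have h1 := hLip1 θhat hhat θbar hbar
    have h2 : (0:ℝ) ≤ ‖H1 θhat - H1 θbar‖ := norm_nonneg _
    have h3 : (0:ℝ) < ‖θhat - θbar‖ := by
      simpa [sub_eq_zero] using (norm_pos_iff.mpr (sub_ne_zero.mpr hne))
    nlinarith
  -- mean value inequality along the segment
  set C : ℝ := 2 * M * ‖θhat - θbar‖ + 2 * M * ‖θhat - θstar‖ + ‖H1 θstar - HN θstar‖
  have hseg : segment ℝ θbar θhat ⊆ U := hU.segment_subset hbar hhat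
  have hsegball : segment ℝ θbar θhat ⊆ Metric.closedBall θhat (dist θbar θhat) := by
    apply (convex_closedBall _ _).segment_subset
    · simp
    · simp [dist_nonneg]
  have key := (convex_segment θbar θhat).norm_image_sub_le_of_norm_hasFDerivWithin_le
    (f := G) (f' := fun x => H1 x - HN x) (C := C) ?_ ?_
    (left_mem_segment ℝ θbar θhat) (right_mem_segment ℝ θbar θhat)
  · simpa [dist_eq_norm] using key
  · intro x hx
    exact (((hH1 x (hseg hx)).sub (hHN x (hseg hx)))).hasFDerivWithinAt
  · intro x hx
    have hxU := hseg hx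
    have hxd : ‖x - θhat‖ ≤ ‖θbar - θhat‖ := by
      have := hsegball hx
      simpa [Metric.mem_closedBall, dist_eq_norm] using this
    have hxs : ‖x - θstar‖ ≤ ‖θhat - θbar‖ + ‖θhat - θstar‖ := by
      calc ‖x - θstar‖ ≤ ‖x - θhat‖ + ‖θhat - θstar‖ := by
            simpa using norm_sub_le_norm_sub_add_norm_sub x θhat θstar
        _ ≤ ‖θhat - θbar‖ + ‖θhat - θstar‖ := by
            have : ‖θbar - θhat‖ = ‖θhat - θbar‖ := norm_sub_rev _ _
            linarith
    have h1 := hLip1 x hxU θstar hstar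
    have h2 := hLipN x hxU θstar hstar
    have htri : ‖H1 x - HN x‖ ≤ ‖H1 x - H1 θstar‖ + ‖HN x - HN θstar‖
        + ‖H1 θstar - HN θstar‖ := by
      have : H1 x - HN x = (H1 x - H1 θstar) - (HN x - HN θstar) + (H1 θstar - HN θstar) := by
        abel
      rw [this]
      exact (norm_add_le _ _).trans (by gcongr; exact norm_sub_le _ _)
    have hMx : M * ‖x - θstar‖ ≤ M * (‖θhat - θbar‖ + ‖θhat - θstar‖) := by
      exact mul_le_mul_of_nonneg_left hxs hM
    simp only [C]
    nlinarith
end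

section
/- Let L₁, L_N : ℝ^d → ℝ be twice continuously differentiable, θ̄, θ* ∈ ℝ^d, and define the surrogate L̃(θ) = L₁(θ) - ⟨θ, ∇L₁(θ̄) - ∇L_N(θ̄)⟩. Suppose both L₁ and L_N satisfy the restricted Hessian Lipschitz condition: ‖(∇²L(θ* + δ) - ∇²L(θ*)) δ‖_∞ ≤ M‖δ‖₂² for δ = s(θ̄ - θ*), s ∈ [0,1]. Then ‖∇L̃(θ*)‖_∞ ≤ ‖∇L_N(θ*)‖_∞ + ‖∇²L_N(θ*) - ∇²L₁(θ*)‖_∞ · ‖θ̄ - θ*‖₁ + 2M‖θ̄ - θ*‖₂², where ‖A‖_∞ for a matrix A denotes the maximum absolute entry. -/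
open scoped RealInnerProductSpace

/-- Sup (ℓ∞) norm of a vector given coordinatewise. -/
noncomputable def supNorm {d : ℕ} (v : Fin d → ℝ) : ℝ := ⨆ i, |v i|

/-- Maximum absolute entry of a matrix. -/
noncomputable def matMaxNorm {d : ℕ} (A : Matrix (Fin d) (Fin d) ℝ) : ℝ := ⨆ i, ⨆ j, |A i j|

/-- ℓ₁ norm of a vector given coordinatewise. -/
noncomputable def l1Norm {d : ℕ} (v : Fin d → ℝ) : ℝ := ∑ i, |v i|

lemma supNorm_nonneg {d : ℕ} (v : Fin d → ℝ) : 0 ≤ supNorm v :=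
  Real.iSup_nonneg fun _ => abs_nonneg _

lemma abs_le_supNorm {d : ℕ} (v : Fin d → ℝ) (j : Fin d) : |v j| ≤ supNorm v := by
  unfold supNorm; exact le_ciSup (f := fun i => |v i|) ((Set.finite_range _).bddAbove) j

lemma supNorm_le {d : ℕ} {v : Fin d → ℝ} {c : ℝ} (hc : 0 ≤ c) (h : ∀ j, |v j| ≤ c) :
    supNorm v ≤ c := Real.iSup_le h hc

lemma abs_le_matMaxNorm {d : ℕ} (A : Matrix (Fin d) (Fin d) ℝ) (i j : Fin d) :
    |A i j| ≤ matMaxNorm A := by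
  unfold matMaxNorm
  exact le_trans (le_ciSup (f := fun j => |A i j|) ((Set.finite_range _).bddAbove) j)
    (le_ciSup (f := fun i => ⨆ j, |A i j|) ((Set.finite_range _).bddAbove) i)

lemma matMaxNorm_nonneg {d : ℕ} (A : Matrix (Fin d) (Fin d) ℝ) : 0 ≤ matMaxNorm A :=
  Real.iSup_nonneg fun _ => Real.iSup_nonneg fun _ => abs_nonneg _

lemma l1Norm_nonneg {d : ℕ} (v : Fin d → ℝ) : 0 ≤ l1Norm v :=
  Finset.sum_nonneg fun _ _ => abs_nonneg _

lemma abs_mulVec_le {d : ℕ} (A : Matrix (Fin d) (Fin d) ℝ) (v : Fin d → ℝ) (j : Fin d) :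
    |A.mulVec v j| ≤ matMaxNorm A * l1Norm v := by
  have h0 : A.mulVec v j = ∑ i, A j i * v i := rfl
  rw [h0]
  calc |∑ i, A j i * v i| ≤ ∑ i, |A j i * v i| := Finset.abs_sum_le_sum_abs _ _
    _ ≤ ∑ i, matMaxNorm A * |v i| := by
        refine Finset.sum_le_sum fun i _ => ?_
        rw [abs_mul]
        exact mul_le_mul_of_nonneg_right (abs_le_matMaxNorm A j i) (abs_nonneg _)
    _ = matMaxNorm A * l1Norm v := by rw [l1Norm, Finset.mul_sum]

lemma mulVec_smul' {d : ℕ} (A : Matrix (Fin d) (Fin d) ℝ) (s : ℝ) (v : Fin d → ℝ) (j : Fin d) :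
    A.mulVec (fun i => s * v i) j = s * A.mulVec v j := by
  simp only [Matrix.mulVec, dotProduct, Finset.mul_sum]
  exact Finset.sum_congr rfl fun i _ => by ring

lemma key_ftc {d : ℕ} (L : EuclideanSpace ℝ (Fin d) → ℝ)
    (H : EuclideanSpace ℝ (Fin d) → Matrix (Fin d) (Fin d) ℝ)
    (θbar θstar : EuclideanSpace ℝ (Fin d)) (M : ℝ)
    (hL : ContDiff ℝ 2 L)
    (hH : ∀ θ, HasFDerivAt (gradient L)
      (LinearMap.toContinuousLinearMap (Matrix.toEuclideanLin (H θ))) θ)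
    (hLip : ∀ s ∈ Set.Icc (0:ℝ) 1,
      supNorm ((H (θstar + s • (θbar - θstar)) - H θstar).mulVec
          (fun i => s * (θbar i - θstar i)))
        ≤ M * ‖s • (θbar - θstar)‖ ^ 2)
    (j : Fin d) :
    |gradient L θbar j - gradient L θstar j
        - (H θstar).mulVec (fun i => θbar i - θstar i) j| ≤ M * ‖θbar - θstar‖ ^ 2 := by
  set δ : EuclideanSpace ℝ (Fin d) := θbar - θstar with hδ
  set δf : Fin d → ℝ := fun i => θbar i - θstar i with hδf
  have hδfδ : ∀ i, δ i = δf i := fun i => rfl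
  have hMnn : 0 ≤ M * ‖δ‖ ^ 2 := by
    have h := hLip 1 (by norm_num)
    rw [one_smul] at h
    exact le_trans (supNorm_nonneg _) h
  set path : ℝ → EuclideanSpace ℝ (Fin d) := fun s => θstar + s • δ with hpathdef
  have hpath : ∀ s : ℝ, HasDerivAt path δ s := by
    intro s
    have := ((hasDerivAt_id s).smul_const δ).const_add θstar
    rw [one_smul] at this
    exact this
  set g : ℝ → ℝ := fun s => (H (path s)).mulVec δf j with hgdef
  have happ : ∀ θ, (LinearMap.toContinuousLinearMap (Matrix.toEuclideanLin (H θ))) δ j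
      = (H θ).mulVec δf j := fun θ => rfl
  have hφ : ∀ s : ℝ, HasDerivAt (fun t => gradient L (path t) j) (g s) s := by
    intro s
    have h1 := (hH (path s)).comp_hasDerivAt s (hpath s)
    have h2 := (EuclideanSpace.proj (𝕜 := ℝ) j).hasFDerivAt.comp_hasDerivAt s h1
    exact h2
  -- continuity of g
  have hgradC : ContDiff ℝ 1 (gradient L) := by
    have h1 : ContDiff ℝ 1 (fderiv ℝ L) := hL.fderiv_right (by norm_num)
    exact ((InnerProductSpace.toDual ℝ (EuclideanSpace ℝ (Fin d))).symm.contDiff).comp h1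
  have hfC : Continuous (fun θ => fderiv ℝ (gradient L) θ) := hgradC.continuous_fderiv (by norm_num)
  have hfeq : ∀ θ, fderiv ℝ (gradient L) θ
      = LinearMap.toContinuousLinearMap (Matrix.toEuclideanLin (H θ)) := fun θ => (hH θ).fderiv
  have hgc : Continuous g := by
    have h1 : Continuous (fun s => (fderiv ℝ (gradient L) (path s)) δ j) := by
      apply ((EuclideanSpace.proj (𝕜 := ℝ) j).continuous).comp
      have hpc : Continuous path := continuous_const.add (continuous_id.smul continuous_const)
      exact (ContinuousLinearMap.apply ℝ _ δ).continuous.comp (hfC.comp hpc)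
    have h2 : (fun s => (fderiv ℝ (gradient L) (path s)) δ j) = g := by
      funext s; rw [hfeq]; exact happ _
    rwa [h2] at h1
  have hFTC : ∫ s in (0:ℝ)..1, g s
      = gradient L (path 1) j - gradient L (path 0) j :=
    intervalIntegral.integral_eq_sub_of_hasDerivAt (fun s _ => hφ s)
      (hgc.intervalIntegrable 0 1)
  have hp1 : path 1 = θbar := by simp [hpathdef, hδ]
  have hp0 : path 0 = θstar := by simp [hpathdef]
  have hconst : ∫ _ in (0:ℝ)..1, (H θstar).mulVec δf j = (H θstar).mulVec δf j := by simp
  have hrepr : gradient L θbar j - gradient L θstar j - (H θstar).mulVec δf j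
      = ∫ s in (0:ℝ)..1, (g s - (H θstar).mulVec δf j) := by
    rw [intervalIntegral.integral_sub (hgc.intervalIntegrable 0 1)
      intervalIntegrable_const, hFTC, hp1, hp0, hconst]
  rw [hrepr]
  have hbound : ∀ s ∈ Set.uIoc (0:ℝ) 1, ‖g s - (H θstar).mulVec δf j‖ ≤ M * ‖δ‖ ^ 2 := by
    intro s hs
    rw [Set.uIoc_of_le (by norm_num : (0:ℝ) ≤ 1)] at hs
    obtain ⟨hs0, hs1⟩ := hs
    have hdiff : g s - (H θstar).mulVec δf j = (H (path s) - H θstar).mulVec δf j := by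
      simp [hgdef, Matrix.sub_mulVec]
    rw [Real.norm_eq_abs, hdiff]
    have hsup := hLip s ⟨le_of_lt hs0, hs1⟩
    have hmem : |( (H (path s) - H θstar).mulVec (fun i => s * δf i)) j|
        ≤ M * ‖s • δ‖ ^ 2 := le_trans (abs_le_supNorm _ j) hsup
    rw [mulVec_smul'] at hmem
    rw [abs_mul, abs_of_pos hs0] at hmem
    have hns : ‖s • δ‖ ^ 2 = s ^ 2 * ‖δ‖ ^ 2 := by
      rw [norm_smul, Real.norm_eq_abs, mul_pow, sq_abs]
    rw [hns] at hmem
    have h1 : |(H (path s) - H θstar).mulVec δf j| ≤ s * (M * ‖δ‖ ^ 2) :=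
      le_of_mul_le_mul_left (by nlinarith) hs0
    calc |(H (path s) - H θstar).mulVec δf j| ≤ s * (M * ‖δ‖ ^ 2) := h1
      _ ≤ 1 * (M * ‖δ‖ ^ 2) := mul_le_mul_of_nonneg_right hs1 hMnn
      _ = M * ‖δ‖ ^ 2 := one_mul _
  calc ‖∫ s in (0:ℝ)..1, (g s - (H θstar).mulVec δf j)‖
      ≤ M * ‖δ‖ ^ 2 * |1 - 0| :=
        intervalIntegral.norm_integral_le_of_norm_le_const hbound
    _ = M * ‖δ‖ ^ 2 := by norm_num

/-- Sup-norm bound on the surrogate gradient at the truth: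
`‖∇L̃(θ*)‖_∞ ≤ ‖∇L_N(θ*)‖_∞ + ‖∇²L_N(θ*) - ∇²L₁(θ*)‖_∞ ‖θ̄ - θ*‖₁ + 2M‖θ̄ - θ*‖₂²`,
under the restricted Hessian Lipschitz conditions along the segment
`δ = s(θ̄ - θ*)`, `s ∈ [0,1]`. -/
theorem stmt_10 {d : ℕ} (L1 LN : EuclideanSpace ℝ (Fin d) → ℝ)
    (H1 HN : EuclideanSpace ℝ (Fin d) → Matrix (Fin d) (Fin d) ℝ)
    (θbar θstar : EuclideanSpace ℝ (Fin d)) (M : ℝ)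
    (hL1 : ContDiff ℝ 2 L1) (hLN : ContDiff ℝ 2 LN)
    (hH1 : ∀ θ, HasFDerivAt (gradient L1)
      (LinearMap.toContinuousLinearMap (Matrix.toEuclideanLin (H1 θ))) θ)
    (hHN : ∀ θ, HasFDerivAt (gradient LN)
      (LinearMap.toContinuousLinearMap (Matrix.toEuclideanLin (HN θ))) θ)
    (hLip1 : ∀ s ∈ Set.Icc (0:ℝ) 1,
      supNorm ((H1 (θstar + s • (θbar - θstar)) - H1 θstar).mulVec
          (fun i => s * (θbar i - θstar i)))
        ≤ M * ‖s • (θbar - θstar)‖ ^ 2)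
    (hLipN : ∀ s ∈ Set.Icc (0:ℝ) 1,
      supNorm ((HN (θstar + s • (θbar - θstar)) - HN θstar).mulVec
          (fun i => s * (θbar i - θstar i)))
        ≤ M * ‖s • (θbar - θstar)‖ ^ 2) :
    supNorm (fun i =>
        gradient (fun θ => L1 θ - ⟪θ, gradient L1 θbar - gradient LN θbar⟫) θstar i)
      ≤ supNorm (fun i => gradient LN θstar i)
        + matMaxNorm (HN θstar - H1 θstar) * l1Norm (fun i => θbar i - θstar i)
        + 2 * M * ‖θbar - θstar‖ ^ 2 := by
  set c : EuclideanSpace ℝ (Fin d) := gradient L1 θbar - gradient LN θbar with hc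
  have hg1 : HasGradientAt L1 (gradient L1 θstar) θstar :=
    ((hL1.differentiable (by norm_num)) θstar).hasGradientAt
  have hinner : HasGradientAt (fun θ : EuclideanSpace ℝ (Fin d) => ⟪θ, c⟫) c θstar := by
    rw [hasGradientAt_iff_hasFDerivAt]
    have h := (InnerProductSpace.toDual ℝ (EuclideanSpace ℝ (Fin d)) c).hasFDerivAt (x := θstar)
    exact h.congr_of_eventuallyEq (Filter.Eventually.of_forall fun θ => by
      rw [InnerProductSpace.toDual_apply_apply]; exact real_inner_comm _ _)
  have hgt : HasGradientAt (fun θ => L1 θ - ⟪θ, c⟫) (gradient L1 θstar - c) θstar := by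
    rw [hasGradientAt_iff_hasFDerivAt] at hg1 hinner ⊢
    rw [map_sub]
    exact hg1.sub hinner
  have hgrad_eq : gradient (fun θ => L1 θ - ⟪θ, c⟫) θstar = gradient L1 θstar - c :=
    hgt.gradient
  set δf : Fin d → ℝ := fun i => θbar i - θstar i with hδf
  have hMnn : 0 ≤ M * ‖θbar - θstar‖ ^ 2 := by
    have h := hLipN 1 (by norm_num)
    rw [one_smul] at h
    exact le_trans (supNorm_nonneg _) h
  have hN := fun j => key_ftc LN HN θbar θstar M hLN hHN hLipN j
  have h1 := fun j => key_ftc L1 H1 θbar θstar M hL1 hH1 hLip1 j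
  apply supNorm_le
  · have := mul_nonneg (matMaxNorm_nonneg (HN θstar - H1 θstar)) (l1Norm_nonneg δf)
    have := supNorm_nonneg (fun i => gradient LN θstar i)
    nlinarith [hMnn]
  intro j
  have hval : gradient (fun θ => L1 θ - ⟪θ, c⟫) θstar j
      = gradient LN θstar j + (HN θstar - H1 θstar).mulVec δf j
        + ((gradient LN θbar j - gradient LN θstar j - (HN θstar).mulVec δf j)
        - (gradient L1 θbar j - gradient L1 θstar j - (H1 θstar).mulVec δf j)) := by
    have h0 : gradient (fun θ => L1 θ - ⟪θ, c⟫) θstar j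
        = gradient L1 θstar j - (gradient L1 θbar j - gradient LN θbar j) := by
      rw [hgrad_eq]; rfl
    rw [h0, Matrix.sub_mulVec]
    simp only [Pi.sub_apply]
    ring
  rw [hval]
  have hB := abs_mulVec_le (HN θstar - H1 θstar) δf j
  have hA := abs_le_supNorm (fun i => gradient LN θstar i) j
  have hC := hN j
  have hD := h1 j
  have t1 : |gradient LN θstar j + (HN θstar - H1 θstar).mulVec δf j
      + ((gradient LN θbar j - gradient LN θstar j - (HN θstar).mulVec δf j)
      - (gradient L1 θbar j - gradient L1 θstar j - (H1 θstar).mulVec δf j))|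
      ≤ |gradient LN θstar j| + |(HN θstar - H1 θstar).mulVec δf j|
        + (|gradient LN θbar j - gradient LN θstar j - (HN θstar).mulVec δf j|
        + |gradient L1 θbar j - gradient L1 θstar j - (H1 θstar).mulVec δf j|) := by
    refine le_trans (abs_add_le _ _) ?_
    have := abs_add_le (gradient LN θstar j) ((HN θstar - H1 θstar).mulVec δf j)
    have := abs_sub (gradient LN θbar j - gradient LN θstar j - (HN θstar).mulVec δf j)
      (gradient L1 θbar j - gradient L1 θstar j - (H1 θstar).mulVec δf j)
    linarith
  linarith
end
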